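/- arXiv:1011.5237 — 9 statements merged into one kernel-verified Lean document; each statement's English description precedes it below -/
import Mathlib

section
/- Let P and Q be orthogonal projections on a complex Hilbert space H and let T = PQ. Then ‖Tx‖² = ⟨Tx, x⟩ for every x in the orthogonal complement of the kernel of T. -/
open ContinuousLinearMap Submodule LinearMap

variable {H : Type*} [NormedAddCommGroup H] [InnerProductSpace ℂ H] [CompleteSpace H]

/-- `P` is an orthogonal projection: `P² = P = P*`. -/
def IsOrthoProj (P : H →L[ℂ] H) : Prop :=
  P ∘L P = P ∧ ContinuousLinearMap.adjoint P = P

/-- The orthogonal projection onto a (complete, i.e. closed) subspace,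
as an operator on `H`. -/
noncomputable def projOn (K : Submodule ℂ H) [CompleteSpace K] : H →L[ℂ] H :=
  K.subtypeL.comp (orthogonalProjection K)

/-- The orthogonal projection onto a closed subspace, as an operator on `H`. -/
noncomputable def projOnc (K : Submodule ℂ H) (hK : IsClosed (K : Set H)) : H →L[ℂ] H :=
  haveI : CompleteSpace K := hK.completeSpace_coe
  K.subtypeL.comp (orthogonalProjection K)

/-! `T*T - T` maps into `ker T` as soon as `T T* T = T²`, which holds for `T = PQ` since
`T* = QP`; pairing with `x ⊥ ker T` then gives `‖Tx‖² = ⟨T*Tx, x⟩ = ⟨Tx, x⟩`. -/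

theorem norm_apply_sq_eq_inner_apply_of_mem_ker_orthogonal {𝕜 E : Type*} [RCLike 𝕜]
    [NormedAddCommGroup E] [InnerProductSpace 𝕜 E] [CompleteSpace E] {T : E →L[𝕜] E}
    (hT : T ∘L (adjoint T ∘L T) = T ∘L T) {x : E} (hx : x ∈ (ker (T : E →ₗ[𝕜] E))ᗮ) :
    (‖T x‖ : 𝕜) ^ 2 = inner 𝕜 (T x) x := by
  have hker : adjoint T (T x) - T x ∈ ker (T : E →ₗ[𝕜] E) := by
    simpa [sub_eq_zero] using congr($hT x)
  have horth : inner 𝕜 (adjoint T (T x) - T x) x = 0 := (mem_orthogonal _ x).mp hx _ hker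
  rwa [inner_sub_left, sub_eq_zero, ContinuousLinearMap.adjoint_inner_left,
    inner_self_eq_norm_sq_to_K] at horth

theorem IsOrthoProj.apply_apply {P : H →L[ℂ] H} (hP : IsOrthoProj P) (x : H) :
    P (P x) = P x :=
  DFunLike.congr_fun hP.1 x

theorem IsOrthoProj.comp_adjoint_comp_eq {P Q : H →L[ℂ] H} (hP : IsOrthoProj P)
    (hQ : IsOrthoProj Q) : P ∘L Q ∘L (adjoint (P ∘L Q) ∘L P ∘L Q) = P ∘L Q ∘L (P ∘L Q) := by
  rw [ContinuousLinearMap.adjoint_comp, hP.2, hQ.2]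
  ext x
  simp only [ContinuousLinearMap.comp_apply, hP.apply_apply, hQ.apply_apply]

theorem stmt2 (P Q T : H →L[ℂ] H) (hP : IsOrthoProj P) (hQ : IsOrthoProj Q)
    (hT : T = P ∘L Q) :
    ∀ x ∈ (LinearMap.ker (T : H →ₗ[ℂ] H))ᗮ, (‖T x‖ : ℂ) ^ 2 = inner ℂ (T x) x := by
  subst hT
  exact fun x hx =>
    norm_apply_sq_eq_inner_apply_of_mem_ker_orthogonal (hP.comp_adjoint_comp_eq hQ) hx
end

section
/- Let T be a bounded operator on a complex Hilbert space H with ‖Tx‖² = ⟨Tx, x⟩ for all x in N(T)^⊥. Then T*T = P_{N(T)^⊥} T, where P_{N(T)^⊥} is the orthogonal projection onto the orthogonal complement of the kernel of T. -/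
/-!
Let `M = N(T)ᗮ` and `P` the projection onto it. For `x ∈ M` the hypothesis says
`⟪Tx, Tx - x⟫ = 0`, so the sesquilinear form `(x, y) ↦ ⟪Tx, Ty - y⟫` vanishes on the diagonal of
`M`, hence on all of `M × M` by complex polarization. Since `T = TP`, this gives
`⟪T*Tw, z⟫ = ⟪TPw, TPz⟫ = ⟪TPw, Pz⟫ = ⟪PTw, z⟫`.
-/

open ContinuousLinearMap Submodule LinearMap

variable {H : Type*} [NormedAddCommGroup H] [InnerProductSpace ℂ H] [CompleteSpace H]

open scoped InnerProductSpace

theorem inner_map_map_eq_zero_of_forall_self {V F : Type*} [AddCommGroup V] [Module ℂ V]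
    [SeminormedAddCommGroup F] [InnerProductSpace ℂ F] (A B : V →ₗ[ℂ] F)
    (h : ∀ x, ⟪A x, B x⟫_ℂ = 0) (x y : V) : ⟪A x, B y⟫_ℂ = 0 := by
  have hadd := h (x + y)
  have hrot := h (x + Complex.I • y)
  simp only [map_add, map_smul, inner_add_left, inner_add_right, inner_smul_left,
    inner_smul_right, h x, h y, Complex.conj_I] at hadd hrot
  linear_combination (-Complex.I / 2) * hrot + (1 / 2) * hadd +
    ((⟪A x, B y⟫_ℂ - ⟪A y, B x⟫_ℂ) / 2) * Complex.I_sq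

theorem inner_map_map_eq_inner_of_forall_norm_sq_eq_inner {E : Type*}
    [SeminormedAddCommGroup E] [InnerProductSpace ℂ E] (T : E →ₗ[ℂ] E) (K : Submodule ℂ E)
    (h : ∀ x ∈ K, (‖T x‖ : ℂ) ^ 2 = ⟪T x, x⟫_ℂ) {x y : E} (hx : x ∈ K) (hy : y ∈ K) :
    ⟪T x, T y⟫_ℂ = ⟪T x, y⟫_ℂ := by
  have hdiag (z : K) : ⟪(T ∘ₗ K.subtype) z, ((T - LinearMap.id) ∘ₗ K.subtype) z⟫_ℂ = 0 := by
    simp [inner_sub_right, inner_self_eq_norm_sq_to_K, h z z.2]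
  simpa [inner_sub_right, sub_eq_zero] using
    inner_map_map_eq_zero_of_forall_self _ _ hdiag ⟨x, hx⟩ ⟨y, hy⟩

theorem ContinuousLinearMap.apply_starProjection_orthogonal_ker {𝕜 E F : Type*} [RCLike 𝕜]
    [NormedAddCommGroup E] [InnerProductSpace 𝕜 E] [CompleteSpace E] [AddCommGroup F]
    [Module 𝕜 F] [TopologicalSpace F] [T1Space F] (T : E →L[𝕜] F) (w : E) :
    T ((LinearMap.ker (T : E →ₗ[𝕜] F))ᗮ.starProjection w) = T w := by
  have hker : (LinearMap.ker (T : E →ₗ[𝕜] F))ᗮᗮ = LinearMap.ker (T : E →ₗ[𝕜] F) := by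
    rw [orthogonal_orthogonal_eq_closure, (isClosed_ker T).submodule_topologicalClosure_eq]
  have hmem := hker.le ((LinearMap.ker (T : E →ₗ[𝕜] F))ᗮ.sub_starProjection_mem_orthogonal w)
  rw [LinearMap.mem_ker, map_sub, sub_eq_zero] at hmem
  exact hmem.symm

theorem stmt3 (T : H →L[ℂ] H)
    (h : ∀ x ∈ (LinearMap.ker (T : H →ₗ[ℂ] H))ᗮ, (‖T x‖ : ℂ) ^ 2 = inner ℂ (T x) x) :
    ContinuousLinearMap.adjoint T ∘L T = projOn (LinearMap.ker (T : H →ₗ[ℂ] H))ᗮ ∘L T := by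
  set M := (LinearMap.ker (T : H →ₗ[ℂ] H))ᗮ
  have hT (w : H) : T (M.starProjection w) = T w := T.apply_starProjection_orthogonal_ker w
  ext w
  refine ext_inner_right ℂ fun z => ?_
  calc ⟪(adjoint T ∘L T) w, z⟫_ℂ = ⟪T (M.starProjection w), T (M.starProjection z)⟫_ℂ := by
        rw [ContinuousLinearMap.comp_apply, ContinuousLinearMap.adjoint_inner_left, hT, hT]
    _ = ⟪T (M.starProjection w), M.starProjection z⟫_ℂ :=
        inner_map_map_eq_inner_of_forall_norm_sq_eq_inner (T : H →ₗ[ℂ] H) M h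
          (M.starProjection_apply_mem w) (M.starProjection_apply_mem z)
    _ = ⟪(projOn M ∘L T) w, z⟫_ℂ := by
        rw [hT, ← inner_starProjection_left_eq_right]; rfl
end

section
/- Let P and Q be orthogonal projections on a complex Hilbert space H and let T = PQ. Then the closure of the range of T intersects the kernel of T trivially: cl(R(T)) ∩ N(T) = {0}. -/
/-!
A vector `x ∈ cl R(PQ) ∩ N(PQ)` lies in the closed subspace `R(P)`, so `P x = x` and
`‖Q x‖² = ⟪Q x, P x⟫ = ⟪P Q x, x⟫ = 0`. Hence `(PQ)* x = Q P x = Q x = 0`, i.e. `x ⊥ R(PQ)`,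
and a vector of `cl R(PQ)` orthogonal to `R(PQ)` is zero.
-/

open ContinuousLinearMap Submodule LinearMap
open scoped InnerProductSpace

variable {H : Type*} [NormedAddCommGroup H] [InnerProductSpace ℂ H] [CompleteSpace H]

namespace ContinuousLinearMap

variable {𝕜 E : Type*} [RCLike 𝕜] [NormedAddCommGroup E] [InnerProductSpace 𝕜 E]

theorem topologicalClosure_range_comp_le_range {P : E →L[𝕜] E} (hP : IsIdempotentElem P)
    (Q : E →L[𝕜] E) : (P ∘L Q).range.topologicalClosure ≤ P.range :=
  Submodule.topologicalClosure_minimal _ (LinearMap.range_comp_le_range _ _) hP.isClosed_range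

variable [CompleteSpace E]

theorem topologicalClosure_range_inf_ker_adjoint_eq_bot (T : E →L[𝕜] E) :
    T.range.topologicalClosure ⊓ (adjoint T).ker = ⊥ := by
  rw [← orthogonal_range, ← Submodule.orthogonal_closure]
  exact Submodule.inf_orthogonal_eq_bot _

theorem ker_comp_inf_range_le_ker_adjoint_comp {P Q : E →L[𝕜] E} (hP : IsStarProjection P)
    (hQ : IsStarProjection Q) : (P ∘L Q).ker ⊓ P.range ≤ (adjoint (P ∘L Q)).ker := by
  rintro x ⟨hPQx, hx⟩
  have hPx : P x = x := hP.isIdempotentElem.toLinearMap.mem_range_iff.mp hx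
  have hQx : Q x = 0 := by
    rw [← inner_self_eq_zero (𝕜 := 𝕜)]
    calc ⟪Q x, Q x⟫_𝕜 = ⟪Q (Q x), x⟫_𝕜 := (hQ.isSelfAdjoint.isSymmetric (Q x) x).symm
      _ = ⟪Q x, x⟫_𝕜 := by rw [← mul_apply_eq_comp, hQ.isIdempotentElem.eq]
      _ = ⟪Q x, P x⟫_𝕜 := by rw [hPx]
      _ = ⟪P (Q x), x⟫_𝕜 := (hP.isSelfAdjoint.isSymmetric (Q x) x).symm
      _ = 0 := by rw [show P (Q x) = 0 from hPQx, inner_zero_left]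
  simp [adjoint_comp, hP.isSelfAdjoint.adjoint_eq, hQ.isSelfAdjoint.adjoint_eq, hPx, hQx]

end ContinuousLinearMap

theorem IsOrthoProj.isStarProjection {P : H →L[ℂ] H} (hP : IsOrthoProj P) : IsStarProjection P :=
  ⟨hP.1, hP.2⟩

theorem stmt4 (P Q T : H →L[ℂ] H) (hP : IsOrthoProj P) (hQ : IsOrthoProj Q)
    (hT : T = P ∘L Q) :
    (LinearMap.range (T : H →ₗ[ℂ] H)).topologicalClosure ⊓ LinearMap.ker (T : H →ₗ[ℂ] H) = ⊥ := by
  subst hT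
  have hP := hP.isStarProjection
  refine eq_bot_iff.mpr (le_trans ?_ (P ∘L Q).topologicalClosure_range_inf_ker_adjoint_eq_bot.le)
  rintro x ⟨hx_closure, hx_ker⟩
  exact ⟨hx_closure, ker_comp_inf_range_le_ker_adjoint_comp hP hQ.isStarProjection
    ⟨hx_ker, topologicalClosure_range_comp_le_range hP.isIdempotentElem Q hx_closure⟩⟩
end

section
/- Let T be a product of two orthogonal projections on a Hilbert space H and suppose T = P_M P_N for closed subspaces M, N. Then for all x ∈ H, ‖(P_M − P_N)x‖ ≥ ‖(P_{cl R(T)} − P_{N(T)^⊥})x‖; equivalently (P_M − P_N)² ≥ (P_{cl R(T)} − P_{N(T)^⊥})² in the operator order. -/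
open ContinuousLinearMap Submodule LinearMap

variable {H : Type*} [NormedAddCommGroup H] [InnerProductSpace ℂ H] [CompleteSpace H]

/-!
Put `R = closure (range T) ≤ M` and `K = (ker T)ᗮ ≤ N`. Then
`P_R P_K = (P_R P_M)(P_N P_K) = P_R T P_K = T`, and taking adjoints `P_K P_R = P_N P_M`.
For idempotents these two identities make the cross terms cancel:
`(P_M - P_N)² - (P_R - P_K)² = (P_M - P_R) + (P_N - P_K)`, a sum of positive operators.
-/

theorem IsIdempotentElem.sub_mul_self_sub_sub_mul_self {R : Type*} [NonUnitalRing R] {p q r k : R}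
    (hp : IsIdempotentElem p) (hq : IsIdempotentElem q) (hr : IsIdempotentElem r)
    (hk : IsIdempotentElem k) (hpq : p * q = r * k) (hqp : q * p = k * r) :
    (p - q) * (p - q) - (r - k) * (r - k) = (p - r) + (q - k) := by
  simp only [sub_mul, mul_sub, hp.eq, hq.eq, hr.eq, hk.eq, hpq, hqp]
  abel

section

variable {𝕜 E : Type*} [RCLike 𝕜] [NormedAddCommGroup E] [InnerProductSpace 𝕜 E]

theorem Submodule.starProjection_comp_starProjection_of_le' {U V : Submodule 𝕜 E}
    [U.HasOrthogonalProjection] [V.HasOrthogonalProjection] (h : U ≤ V) :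
    V.starProjection ∘L U.starProjection = U.starProjection :=
  ContinuousLinearMap.ext fun x => starProjection_eq_self_iff.2 (h (starProjection_apply_mem U x))

theorem Submodule.topologicalClosure_range_starProjection_comp_le (U : Submodule 𝕜 E)
    [U.HasOrthogonalProjection] (A : E →L[𝕜] E) :
    (U.starProjection ∘L A).range.topologicalClosure ≤ U := by
  refine topologicalClosure_minimal _ ?_ (U.orthogonal_orthogonal ▸ Uᗮ.isClosed_orthogonal)
  rintro _ ⟨x, rfl⟩
  exact starProjection_apply_mem U (A x)

variable [CompleteSpace E]

theorem ContinuousLinearMap.norm_apply_le_of_sq_le {A B : E →L[𝕜] E}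
    (hA : IsSelfAdjoint A) (hB : IsSelfAdjoint B) (h : B ∘L B ≤ A ∘L A) (x : E) :
    ‖B x‖ ≤ ‖A x‖ := by
  have hsq : ‖B x‖ ^ 2 ≤ ‖A x‖ ^ 2 := by
    rw [apply_norm_sq_eq_inner_adjoint_left, apply_norm_sq_eq_inner_adjoint_left, hA.adjoint_eq,
      hB.adjoint_eq, ← sub_nonneg, ← map_sub, ← inner_sub_left]
    exact h.re_inner_nonneg_left x
  exact pow_le_pow_iff_left₀ (norm_nonneg _) (norm_nonneg _) two_ne_zero |>.1 hsq

theorem ContinuousLinearMap.starProjection_topologicalClosure_range_comp (T : E →L[𝕜] E) :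
    T.range.topologicalClosure.starProjection ∘L T = T :=
  ContinuousLinearMap.ext fun x =>
    starProjection_eq_self_iff.2 (T.range.le_topologicalClosure ⟨x, rfl⟩)

theorem ContinuousLinearMap.comp_starProjection_orthogonal_ker (T : E →L[𝕜] E) :
    T ∘L T.kerᗮ.starProjection = T := by
  ext x
  have hker : x - T.kerᗮ.starProjection x ∈ T.ker := by
    simpa only [orthogonal_orthogonal_eq_closure, T.isClosed_ker.submodule_topologicalClosure_eq]
      using sub_starProjection_mem_orthogonal (K := T.kerᗮ) x
  rw [LinearMap.mem_ker, map_sub, sub_eq_zero] at hker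
  exact hker.symm

theorem Submodule.starProjection_sub_comp_self_le {M N R K : Submodule 𝕜 E}
    [M.HasOrthogonalProjection] [N.HasOrthogonalProjection] [R.HasOrthogonalProjection]
    [K.HasOrthogonalProjection] (hRM : R ≤ M) (hKN : K ≤ N)
    (h : R.starProjection ∘L K.starProjection = M.starProjection ∘L N.starProjection) :
    (R.starProjection - K.starProjection) ∘L (R.starProjection - K.starProjection) ≤
      (M.starProjection - N.starProjection) ∘L (M.starProjection - N.starProjection) := by
  have h' : N.starProjection ∘L M.starProjection = K.starProjection ∘L R.starProjection := by
    simpa only [ContinuousLinearMap.adjoint_comp, isSelfAdjoint_starProjection _ |>.adjoint_eq]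
      using congrArg ContinuousLinearMap.adjoint h.symm
  have hsq := IsIdempotentElem.sub_mul_self_sub_sub_mul_self (isIdempotentElem_starProjection M)
    (isIdempotentElem_starProjection N) (isIdempotentElem_starProjection R)
    (isIdempotentElem_starProjection K) h.symm h'
  rw [ContinuousLinearMap.le_def, ← ContinuousLinearMap.mul_def, ← ContinuousLinearMap.mul_def,
    hsq]
  exact (starProjection_le_starProjection_iff.2 hRM).add
    (starProjection_le_starProjection_iff.2 hKN)

end

section ProductOfStarProjections

variable {𝕜 E : Type*} [RCLike 𝕜] [NormedAddCommGroup E] [InnerProductSpace 𝕜 E]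
  {M N : Submodule 𝕜 E} [M.HasOrthogonalProjection] [N.HasOrthogonalProjection]
  {T : E →L[𝕜] E}

theorem topologicalClosure_range_le_of_starProjection_comp_eq
    (hT : M.starProjection ∘L N.starProjection = T) : T.range.topologicalClosure ≤ M :=
  hT ▸ topologicalClosure_range_starProjection_comp_le M _

variable [CompleteSpace E]

theorem orthogonal_ker_le_of_starProjection_comp_eq
    (hT : M.starProjection ∘L N.starProjection = T) : T.kerᗮ ≤ N := by
  rw [ContinuousLinearMap.orthogonal_ker, ← hT, ContinuousLinearMap.adjoint_comp,
    (isSelfAdjoint_starProjection M).adjoint_eq, (isSelfAdjoint_starProjection N).adjoint_eq]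
  exact topologicalClosure_range_starProjection_comp_le N _

theorem starProjection_range_comp_starProjection_orthogonal_ker_of_starProjection_comp_eq
    (hT : M.starProjection ∘L N.starProjection = T) :
    T.range.topologicalClosure.starProjection ∘L T.kerᗮ.starProjection = T :=
  calc T.range.topologicalClosure.starProjection ∘L T.kerᗮ.starProjection
      = (T.range.topologicalClosure.starProjection ∘L M.starProjection) ∘L
          (N.starProjection ∘L T.kerᗮ.starProjection) := by
        rw [starProjection_comp_starProjection_of_le
            (topologicalClosure_range_le_of_starProjection_comp_eq hT),
          starProjection_comp_starProjection_of_le'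
            (orthogonal_ker_le_of_starProjection_comp_eq hT)]
    _ = T.range.topologicalClosure.starProjection ∘L T ∘L T.kerᗮ.starProjection := by
        rw [← hT]
        simp only [ContinuousLinearMap.comp_assoc]
    _ = T := by
        rw [comp_starProjection_orthogonal_ker, starProjection_topologicalClosure_range_comp]

end ProductOfStarProjections

theorem stmt11_general (T : H →L[ℂ] H)
    (M N : Submodule ℂ H) [CompleteSpace M] [CompleteSpace N]
    (hMN : T = projOn M ∘L projOn N) :
    (∀ x : H,
        ‖(projOn M - projOn N) x‖ ≥
          ‖(projOn (LinearMap.range (T : H →ₗ[ℂ] H)).topologicalClosure -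
              projOn (LinearMap.ker (T : H →ₗ[ℂ] H))ᗮ) x‖) ∧
      ((projOn M - projOn N) ∘L (projOn M - projOn N) -
          (projOn (LinearMap.range (T : H →ₗ[ℂ] H)).topologicalClosure - projOn (LinearMap.ker (T : H →ₗ[ℂ] H))ᗮ) ∘L
            (projOn (LinearMap.range (T : H →ₗ[ℂ] H)).topologicalClosure -
              projOn (LinearMap.ker (T : H →ₗ[ℂ] H))ᗮ)).IsPositive := by
  have hT : M.starProjection ∘L N.starProjection = T := hMN.symm
  have hle := starProjection_sub_comp_self_le
    (topologicalClosure_range_le_of_starProjection_comp_eq hT)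
    (orthogonal_ker_le_of_starProjection_comp_eq hT)
    ((starProjection_range_comp_starProjection_orthogonal_ker_of_starProjection_comp_eq hT).trans
      hT.symm)
  refine ⟨norm_apply_le_of_sq_le ?_ ?_ hle, hle⟩
  · exact (isSelfAdjoint_starProjection M).sub (isSelfAdjoint_starProjection N)
  · exact (isSelfAdjoint_starProjection _).sub (isSelfAdjoint_starProjection _)

theorem stmt11 (T : H →L[ℂ] H)
    (hX : ∃ P Q : H →L[ℂ] H, IsOrthoProj P ∧ IsOrthoProj Q ∧ T = P ∘L Q)
    (M N : Submodule ℂ H) [CompleteSpace M] [CompleteSpace N]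
    (hMN : T = projOn M ∘L projOn N) :
    (∀ x : H,
        ‖(projOn M - projOn N) x‖ ≥
          ‖(projOn (LinearMap.range (T : H →ₗ[ℂ] H)).topologicalClosure -
              projOn (LinearMap.ker (T : H →ₗ[ℂ] H))ᗮ) x‖) ∧
      ((projOn M - projOn N) ∘L (projOn M - projOn N) -
          (projOn (LinearMap.range (T : H →ₗ[ℂ] H)).topologicalClosure - projOn (LinearMap.ker (T : H →ₗ[ℂ] H))ᗮ) ∘L
            (projOn (LinearMap.range (T : H →ₗ[ℂ] H)).topologicalClosure -
              projOn (LinearMap.ker (T : H →ₗ[ℂ] H))ᗮ)).IsPositive :=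
  stmt11_general T M N hMN
end

section
/- Let T be a product of two orthogonal projections on a Hilbert space H with closed range. Then ‖P_{R(T)} − P_{N(T)^⊥}‖ < 1, while for every other pair (P, Q) of orthogonal projections with T = PQ and (P,Q) ≠ (P_{R(T)}, P_{N(T)^⊥}), one has ‖P − Q‖ = 1. -/
open ContinuousLinearMap Submodule LinearMap

variable {H : Type*} [NormedAddCommGroup H] [InnerProductSpace ℂ H] [CompleteSpace H]

/-!
Write `T = P_U P_V` with closed subspaces `U`, `V`, and put `A = R(T)`, `K = N(T)ᗮ`. Then `A ≤ U`
and `K ≤ V`, so for `y ∈ K` we get `T y = P_U y` with `y - P_U y ⊥ U ⊇ A`, i.e. `P_A y = T y`;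
as `T` kills `Kᗮ`, this gives `T = P_A P_K`.
As `A` is closed, `T` is bounded below on `K`: `c ‖x‖ ≤ ‖P_A x‖` on `K`, and pairing `y = P_A x`
with `x` gives the same bound for `P_K` on `A`. In
`(P_A - P_K) x = P_A P_Kᗮ x - P_Aᗮ P_K x` the two terms are orthogonal and each is at most
`√(1 - c²)` times the corresponding component of `x`, whence `‖P_A - P_K‖ ≤ √(1 - c²) < 1`.

Conversely `‖P_U - P_V‖ < 1` forces `U ⊓ Vᗮ = ⊥ = V ⊓ Uᗮ`. A vector of `U ⊓ Aᗮ` is killed by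
`T* = P_V P_U`, so lies in `U ⊓ Vᗮ`, and a vector of `V ⊓ Kᗮ = V ⊓ N(T)` lies in `V ⊓ Uᗮ`;
hence `U = A` and `V = K`. Every difference of two orthogonal projections has norm at most `1`.
-/

section StarProjection

variable {𝕜 E : Type*} [RCLike 𝕜] [NormedAddCommGroup E] [InnerProductSpace 𝕜 E]
  {U V : Submodule 𝕜 E} [U.HasOrthogonalProjection] [V.HasOrthogonalProjection]

theorem norm_sub_starProjection_le_of_mul_norm_le {c : ℝ} (hc : 0 ≤ c) {y : E}
    (hy : c * ‖y‖ ≤ ‖U.starProjection y‖) :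
    ‖y - U.starProjection y‖ ≤ √(1 - c ^ 2) * ‖y‖ := by
  have hpyth := U.norm_sq_eq_add_norm_sq_starProjection y
  rw [← starProjection_orthogonal_val, ← Real.sqrt_sq (norm_nonneg y), ← Real.sqrt_mul',
    ← Real.sqrt_sq (norm_nonneg _)]
  · refine Real.sqrt_le_sqrt ?_
    nlinarith [mul_le_mul hy hy (by positivity) (norm_nonneg _)]
  · positivity

theorem mul_norm_le_norm_starProjection_of_starProjection_eq {c : ℝ} (hc : 0 ≤ c) {x y : E}
    (hx : x ∈ V) (hxy : U.starProjection x = y) (hcx : c * ‖x‖ ≤ ‖y‖) :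
    c * ‖y‖ ≤ ‖V.starProjection y‖ := by
  have hinner : ‖y‖ ^ 2 ≤ ‖V.starProjection y‖ * ‖x‖ := by
    calc ‖y‖ ^ 2 = RCLike.re (inner 𝕜 y x) := by
          rw [← hxy, re_inner_starProjection_eq_normSq]; rfl
      _ = RCLike.re (inner 𝕜 (V.starProjection y) x) := by
          rw [inner_starProjection_left_eq_right, starProjection_eq_self_iff.mpr hx]
      _ ≤ ‖V.starProjection y‖ * ‖x‖ := (RCLike.re_le_norm _).trans (norm_inner_le_norm _ _)
  rcases (norm_nonneg y).eq_or_lt with hy | hy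
  · rw [← hy, mul_zero]; exact norm_nonneg _
  · refine le_of_mul_le_mul_right ?_ hy
    nlinarith [mul_le_mul_of_nonneg_left hcx (norm_nonneg (V.starProjection y))]

theorem inf_orthogonal_eq_bot_of_norm_starProjection_sub_lt_one
    (h : ‖U.starProjection - V.starProjection‖ < 1) : U ⊓ Vᗮ = ⊥ := by
  refine (Submodule.eq_bot_iff _).mpr fun x ⟨hxU, hxV⟩ => norm_le_zero_iff.mp ?_
  have hx : (U.starProjection - V.starProjection) x = x := by
    rw [_root_.sub_apply, starProjection_eq_self_iff.mpr hxU,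
      V.starProjection_apply_eq_zero_iff.mpr hxV, sub_zero]
  have := hx ▸ (U.starProjection - V.starProjection).le_opNorm x
  nlinarith [norm_nonneg x]


variable [CompleteSpace E]

theorem norm_starProjection_apply_le_of_mem_orthogonal {s : ℝ} (hs : 0 ≤ s)
    (hVU : ∀ y ∈ U, ‖y - V.starProjection y‖ ≤ s * ‖y‖) {z : E} (hz : z ∈ Vᗮ) :
    ‖U.starProjection z‖ ≤ s * ‖z‖ := by
  -- `P_U P_Vᗮ` is the adjoint of `P_Vᗮ P_U`, whose norm the hypothesis bounds.
  set B := Vᗮ.starProjection ∘L U.starProjection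
  have hB : ‖B‖ ≤ s := by
    refine opNorm_le_bound _ hs fun x => ?_
    rw [ContinuousLinearMap.comp_apply, starProjection_orthogonal_val]
    exact (hVU _ (U.starProjection_apply_mem x)).trans
      (mul_le_mul_of_nonneg_left (U.norm_starProjection_apply_le x) hs)
  have hBadj : adjoint B = U.starProjection ∘L Vᗮ.starProjection := by
    rw [ContinuousLinearMap.adjoint_comp, (isSelfAdjoint_starProjection U).adjoint_eq,
      (isSelfAdjoint_starProjection Vᗮ).adjoint_eq]
  calc ‖U.starProjection z‖ = ‖adjoint B z‖ := by
        rw [hBadj, ContinuousLinearMap.comp_apply, starProjection_eq_self_iff.mpr hz]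
    _ ≤ ‖adjoint B‖ * ‖z‖ := le_opNorm _ _
    _ ≤ s * ‖z‖ := by rw [LinearIsometryEquiv.norm_map]; gcongr

theorem norm_starProjection_sub_starProjection_le {s : ℝ} (hs : 0 ≤ s)
    (hUV : ∀ y ∈ V, ‖y - U.starProjection y‖ ≤ s * ‖y‖)
    (hVU : ∀ y ∈ U, ‖y - V.starProjection y‖ ≤ s * ‖y‖) :
    ‖U.starProjection - V.starProjection‖ ≤ s := by
  refine opNorm_le_bound _ hs fun x => ?_
  set a := U.starProjection (Vᗮ.starProjection x)
  set b := V.starProjection x - U.starProjection (V.starProjection x)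
  have hdecomp : (U.starProjection - V.starProjection) x = a - b := by
    simp only [a, b, _root_.sub_apply, starProjection_orthogonal_val, map_sub]
    abel
  have hab : inner 𝕜 a b = 0 :=
    U.inner_right_of_mem_orthogonal (U.starProjection_apply_mem _)
      (U.sub_starProjection_mem_orthogonal _)
  have ha := norm_starProjection_apply_le_of_mem_orthogonal hs hVU (Vᗮ.starProjection_apply_mem x)
  have hb := hUV _ (V.starProjection_apply_mem x)
  have hpyth := V.norm_sq_eq_add_norm_sq_starProjection x
  refine le_of_pow_le_pow_left₀ two_ne_zero (by positivity) ?_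
  rw [hdecomp, @norm_sub_sq 𝕜, hab, map_zero, mul_zero, sub_zero, mul_pow, hpyth]
  nlinarith [mul_le_mul ha ha (norm_nonneg _) (by positivity),
    mul_le_mul hb hb (norm_nonneg _) (by positivity)]

theorem norm_starProjection_sub_starProjection_lt_one {c : ℝ} (hc : 0 < c)
    (hUV : ∀ y ∈ V, c * ‖y‖ ≤ ‖U.starProjection y‖)
    (hVU : ∀ y ∈ U, c * ‖y‖ ≤ ‖V.starProjection y‖) :
    ‖U.starProjection - V.starProjection‖ < 1 := by
  refine (norm_starProjection_sub_starProjection_le (Real.sqrt_nonneg _)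
    (fun y hy => norm_sub_starProjection_le_of_mul_norm_le hc.le (hUV y hy))
    (fun y hy => norm_sub_starProjection_le_of_mul_norm_le hc.le (hVU y hy))).trans_lt ?_
  rw [Real.sqrt_lt' one_pos]
  nlinarith

theorem norm_starProjection_sub_starProjection_le_one :
    ‖U.starProjection - V.starProjection‖ ≤ 1 :=
  norm_starProjection_sub_starProjection_le zero_le_one
    (fun y _ => by
      rw [one_mul, ← starProjection_orthogonal_val]; exact norm_starProjection_apply_le _ y)
    (fun y _ => by
      rw [one_mul, ← starProjection_orthogonal_val]; exact norm_starProjection_apply_le _ y)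

end StarProjection

section ClosedRange

variable {𝕜 E F : Type*} [RCLike 𝕜] [NormedAddCommGroup E] [InnerProductSpace 𝕜 E]
  [CompleteSpace E] [NormedAddCommGroup F] [NormedSpace 𝕜 F]

theorem ContinuousLinearMap.apply_starProjection_orthogonal_ker_s13 (T : E →L[𝕜] F) (x : E) :
    T (T.kerᗮ.starProjection x) = T x := by
  have : CompleteSpace T.ker := T.isClosed_ker.completeSpace_coe
  have hx : x - T.kerᗮ.starProjection x ∈ T.ker := by
    simpa only [orthogonal_orthogonal] using T.kerᗮ.sub_starProjection_mem_orthogonal x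
  rwa [LinearMap.mem_ker, map_sub, sub_eq_zero, eq_comm] at hx

theorem ContinuousLinearMap.exists_pos_mul_norm_le_norm_apply [CompleteSpace F] (T : E →L[𝕜] F)
    (hT : IsClosed (T.range : Set F)) : ∃ c > 0, ∀ x ∈ T.kerᗮ, c * ‖x‖ ≤ ‖T x‖ := by
  set f := T ∘L T.kerᗮ.subtypeL
  have hinj : Function.Injective f := by
    refine (injective_iff_map_eq_zero f).mpr fun x hx => Subtype.ext ?_
    exact (Submodule.mem_bot 𝕜).mp <| T.ker.orthogonal_disjoint.le_bot ⟨hx, x.2⟩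
  have hrange : Set.range f = T.range := by
    refine Set.Subset.antisymm ?_ ?_
    · rintro _ ⟨x, rfl⟩
      exact LinearMap.mem_range_self (T : E →ₗ[𝕜] F) x
    rintro _ ⟨x, rfl⟩
    exact ⟨⟨_, T.kerᗮ.starProjection_apply_mem x⟩, T.apply_starProjection_orthogonal_ker_s13 x⟩
  obtain ⟨C, hC⟩ := f.antilipschitz_of_injective_of_isClosed_range hinj (hrange ▸ hT)
  refine ⟨((C : ℝ) + 1)⁻¹, by positivity, fun x hx => ?_⟩
  rw [inv_mul_le_iff₀ (by positivity)]
  have hbound : ‖x‖ ≤ C * ‖T x‖ := f.bound_of_antilipschitz hC ⟨x, hx⟩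
  nlinarith [norm_nonneg (T x)]

end ClosedRange

section ProductOfStarProjections

variable {𝕜 E : Type*} [RCLike 𝕜] [NormedAddCommGroup E] [InnerProductSpace 𝕜 E]
  {U V : Submodule 𝕜 E} [U.HasOrthogonalProjection] [V.HasOrthogonalProjection] {T : E →L[𝕜] E}

theorem range_le_of_eq_starProjection_comp (hT : T = U.starProjection ∘L V.starProjection) :
    T.range ≤ U := by
  subst hT
  rintro _ ⟨x, rfl⟩
  exact U.starProjection_apply_mem _

theorem orthogonal_ker_le_of_eq_starProjection_comp
    (hT : T = U.starProjection ∘L V.starProjection) : T.kerᗮ ≤ V := by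
  have hker : Vᗮ ≤ T.ker := fun z hz => by
    subst hT
    simp [V.starProjection_apply_eq_zero_iff.mpr hz]
  simpa only [orthogonal_orthogonal] using Submodule.orthogonal_le hker

theorem starProjection_range_apply_of_eq_starProjection_comp
    (hT : T = U.starProjection ∘L V.starProjection) [T.range.HasOrthogonalProjection] {y : E}
    (hy : y ∈ T.kerᗮ) : T.range.starProjection y = T y := by
  refine eq_starProjection_of_mem_orthogonal (LinearMap.mem_range_self (T : E →ₗ[𝕜] E) y) ?_
  have hTy : T y = U.starProjection y := by
    rw [hT, ContinuousLinearMap.comp_apply,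
      starProjection_eq_self_iff.mpr (orthogonal_ker_le_of_eq_starProjection_comp hT hy)]
  rw [hTy]
  exact Submodule.orthogonal_le (range_le_of_eq_starProjection_comp hT)
    (U.sub_starProjection_mem_orthogonal y)

variable [CompleteSpace E]

theorem norm_starProjection_range_sub_starProjection_orthogonal_ker_lt_one
    (hT : T = U.starProjection ∘L V.starProjection) [CompleteSpace T.range] :
    ‖T.range.starProjection - T.kerᗮ.starProjection‖ < 1 := by
  have hcl : IsClosed (T.range : Set E) := (completeSpace_coe_iff_isComplete.mp ‹_›).isClosed
  obtain ⟨c, hc, hbelow⟩ := T.exists_pos_mul_norm_le_norm_apply hcl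
  refine norm_starProjection_sub_starProjection_lt_one hc (fun x hx => ?_) ?_
  · rw [starProjection_range_apply_of_eq_starProjection_comp hT hx]
    exact hbelow x hx
  · rintro _ ⟨x, rfl⟩
    have hx := T.kerᗮ.starProjection_apply_mem x
    rw [ContinuousLinearMap.coe_coe, ← T.apply_starProjection_orthogonal_ker_s13 x]
    exact mul_norm_le_norm_starProjection_of_starProjection_eq hc.le hx
      (starProjection_range_apply_of_eq_starProjection_comp hT hx) (hbelow _ hx)

theorem eq_range_of_norm_starProjection_sub_lt_one (hT : T = U.starProjection ∘L V.starProjection)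
    [T.range.HasOrthogonalProjection] (h : ‖U.starProjection - V.starProjection‖ < 1) :
    U = T.range := by
  have hadj : adjoint T = V.starProjection ∘L U.starProjection := by
    rw [hT, ContinuousLinearMap.adjoint_comp, (isSelfAdjoint_starProjection U).adjoint_eq,
      (isSelfAdjoint_starProjection V).adjoint_eq]
  have hbot : T.rangeᗮ ⊓ U = ⊥ := by
    rw [← le_bot_iff, ← inf_orthogonal_eq_bot_of_norm_starProjection_sub_lt_one h]
    intro z hz
    obtain ⟨hzT, hzU⟩ := Submodule.mem_inf.mp hz
    refine Submodule.mem_inf.mpr ⟨hzU, ?_⟩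
    rw [T.orthogonal_range, LinearMap.mem_ker, ContinuousLinearMap.coe_coe, hadj,
      ContinuousLinearMap.comp_apply, starProjection_eq_self_iff.mpr hzU] at hzT
    exact V.starProjection_apply_eq_zero_iff.mp hzT
  calc U = T.range ⊔ T.rangeᗮ ⊓ U :=
        (sup_orthogonal_inf_of_hasOrthogonalProjection (range_le_of_eq_starProjection_comp hT)).symm
    _ = T.range := by rw [hbot, sup_bot_eq]

theorem eq_orthogonal_ker_of_norm_starProjection_sub_lt_one
    (hT : T = U.starProjection ∘L V.starProjection)
    (h : ‖U.starProjection - V.starProjection‖ < 1) : V = T.kerᗮ := by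
  have : CompleteSpace T.ker := T.isClosed_ker.completeSpace_coe
  have hbot : T.kerᗮᗮ ⊓ V = ⊥ := by
    rw [norm_sub_rev] at h
    rw [← le_bot_iff, ← inf_orthogonal_eq_bot_of_norm_starProjection_sub_lt_one h]
    intro z hz
    obtain ⟨hzT, hzV⟩ := Submodule.mem_inf.mp hz
    refine Submodule.mem_inf.mpr ⟨hzV, ?_⟩
    rw [orthogonal_orthogonal, LinearMap.mem_ker, ContinuousLinearMap.coe_coe, hT,
      ContinuousLinearMap.comp_apply, starProjection_eq_self_iff.mpr hzV] at hzT
    exact U.starProjection_apply_eq_zero_iff.mp hzT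
  calc V = T.kerᗮ ⊔ T.kerᗮᗮ ⊓ V :=
        (sup_orthogonal_inf_of_hasOrthogonalProjection
          (orthogonal_ker_le_of_eq_starProjection_comp hT)).symm
    _ = T.kerᗮ := by rw [hbot, sup_bot_eq]

end ProductOfStarProjections

theorem IsOrthoProj.exists_eq_starProjection {P : H →L[ℂ] H} (hP : IsOrthoProj P) :
    ∃ (K : Submodule ℂ H) (_ : K.HasOrthogonalProjection), P = K.starProjection :=
  isStarProjection_iff_eq_starProjection.mp ⟨hP.1, hP.2⟩

theorem projOn_eq_starProjection {E : Type*} [NormedAddCommGroup E] [InnerProductSpace ℂ E]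
    (K : Submodule ℂ E) [CompleteSpace K] : projOn K = K.starProjection :=
  rfl

theorem projOnc_eq_starProjection {E : Type*} [NormedAddCommGroup E] [InnerProductSpace ℂ E]
    [CompleteSpace E] (K : Submodule ℂ E) (hK : IsClosed (K : Set E)) [CompleteSpace K] :
    projOnc K hK = K.starProjection :=
  rfl

theorem stmt13 (T : H →L[ℂ] H)
    (hX : ∃ P Q : H →L[ℂ] H, IsOrthoProj P ∧ IsOrthoProj Q ∧ T = P ∘L Q)
    (hcl : IsClosed ((LinearMap.range (T : H →ₗ[ℂ] H) : Submodule ℂ H) : Set H)) :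
    ‖projOnc (LinearMap.range (T : H →ₗ[ℂ] H)) hcl - projOn (LinearMap.ker (T : H →ₗ[ℂ] H))ᗮ‖ < 1 ∧
      ∀ P Q : H →L[ℂ] H, IsOrthoProj P → IsOrthoProj Q → T = P ∘L Q →
        ¬(P = projOnc (LinearMap.range (T : H →ₗ[ℂ] H)) hcl ∧ Q = projOn (LinearMap.ker (T : H →ₗ[ℂ] H))ᗮ) →
        ‖P - Q‖ = 1 := by
  have : CompleteSpace T.range := hcl.completeSpace_coe
  rw [projOnc_eq_starProjection, projOn_eq_starProjection]
  constructor
  · obtain ⟨P, Q, hP, hQ, hT⟩ := hX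
    obtain ⟨U, _, rfl⟩ := hP.exists_eq_starProjection
    obtain ⟨V, _, rfl⟩ := hQ.exists_eq_starProjection
    exact norm_starProjection_range_sub_starProjection_orthogonal_ker_lt_one hT
  · intro P Q hP hQ hT hne
    obtain ⟨U, _, rfl⟩ := hP.exists_eq_starProjection
    obtain ⟨V, _, rfl⟩ := hQ.exists_eq_starProjection
    refine le_antisymm norm_starProjection_sub_starProjection_le_one (not_lt.mp fun hlt => hne ?_)
    obtain rfl := eq_range_of_norm_starProjection_sub_lt_one hT hlt
    obtain rfl := eq_orthogonal_ker_of_norm_starProjection_sub_lt_one hT hlt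
    exact ⟨rfl, rfl⟩
end

section
/- Let P be an orthogonal projection and A a positive operator with 0 ≤ A ≤ P on a Hilbert space H. Then the closures of the ranges of P − A, P − A², and P − A^{1/2} all coincide. -/
/-!
For a self-adjoint operator `T` the closure of its range is `(ker T)ᗮ`, so it suffices to show
that `P - A`, `P - A²` and `P - A^{1/2}` have the same kernel. From `A ≤ P` one gets
`‖A^{1/2} y‖² = ⟪A y, y⟫ ≤ ⟪P y, y⟫ = 0` for `y ∈ ker P`, hence `C = C P` for `C = A, A², A^{1/2}`,
and then `x ∈ ker (P - C)` exactly when `P x` is a fixed point of `C`. Finally a positive operator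
`C` and its square `C²` have the same fixed points: if `C² y = y` then `z = C y - y` satisfies
`C z = -z`, which positivity forces to vanish.
-/

open ContinuousLinearMap Submodule LinearMap

variable {H : Type*} [NormedAddCommGroup H] [InnerProductSpace ℂ H] [CompleteSpace H]

open Function

namespace ContinuousLinearMap

section InnerProductSpace

variable {𝕜 E : Type*} [RCLike 𝕜] [NormedAddCommGroup E] [InnerProductSpace 𝕜 E]

theorem IsPositive.isFixedPt_of_isFixedPt_comp_self {C : E →L[𝕜] E} (hC : C.IsPositive) {y : E}
    (h : IsFixedPt (C ∘L C) y) : IsFixedPt C y := by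
  have hCz : C (C y - y) = -(C y - y) := by
    rw [map_sub, ← comp_apply, h.eq, neg_sub]
  have hnonneg := hC.re_inner_nonneg_left (C y - y)
  rw [hCz, inner_neg_left, map_neg, inner_self_eq_norm_sq, neg_nonneg] at hnonneg
  exact sub_eq_zero.mp (norm_eq_zero.mp (by nlinarith [norm_nonneg (C y - y)]))

theorem IsPositive.isFixedPt_comp_self_iff {C : E →L[𝕜] E} (hC : C.IsPositive) {y : E} :
    IsFixedPt (C ∘L C) y ↔ IsFixedPt C y :=
  ⟨hC.isFixedPt_of_isFixedPt_comp_self, fun h => h.comp h⟩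

variable [CompleteSpace E]

theorem ker_le_ker_of_sub_isPositive {P A B : E →L[𝕜] E} (hAP : (P - A).IsPositive)
    (hB : IsSelfAdjoint B) (hBA : B ∘L B = A) : P.ker ≤ B.ker := by
  intro y (hy : P y = 0)
  show B y = 0
  have hAy : inner 𝕜 (A y) y = inner 𝕜 (B y) (B y) := by
    rw [← hBA, comp_apply, ← adjoint_inner_left, isSelfAdjoint_iff'.mp hB]
  have hnonneg := hAP.re_inner_nonneg_left y
  rw [_root_.sub_apply, hy, zero_sub, inner_neg_left, hAy, map_neg, inner_self_eq_norm_sq,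
    neg_nonneg] at hnonneg
  exact norm_eq_zero.mp (by nlinarith [norm_nonneg (B y)])

theorem _root_.IsSelfAdjoint.topologicalClosure_range {T : E →L[𝕜] E} (hT : IsSelfAdjoint T) :
    T.range.topologicalClosure = T.kerᗮ := by
  rw [T.orthogonal_ker, isSelfAdjoint_iff'.mp hT]

theorem topologicalClosure_range_eq_of_ker_eq {S T : E →L[𝕜] E} (hS : IsSelfAdjoint S)
    (hT : IsSelfAdjoint T) (h : S.ker = T.ker) :
    S.range.topologicalClosure = T.range.topologicalClosure := by
  rw [hS.topologicalClosure_range, hT.topologicalClosure_range, h]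

end InnerProductSpace

section Module

variable {R M : Type*} [Ring R] [TopologicalSpace M] [AddCommGroup M] [IsTopologicalAddGroup M]
  [Module R M]

theorem mem_ker_sub_iff_isFixedPt {P C : M →L[R] M} (hP : P ∘L P = P) (hC : P.ker ≤ C.ker)
    {x : M} : x ∈ (P - C).ker ↔ IsFixedPt C (P x) := by
  have hCP : C x = C (P x) := by
    have hx : x - P x ∈ P.ker := by
      rw [LinearMap.mem_ker, coe_coe, map_sub, ← comp_apply, hP, sub_self]
    simpa [sub_eq_zero] using hC hx
  rw [LinearMap.mem_ker, coe_coe, _root_.sub_apply, sub_eq_zero, IsFixedPt, ← hCP, eq_comm]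

theorem ker_sub_eq_ker_sub {P C D : M →L[R] M} (hP : P ∘L P = P) (hC : P.ker ≤ C.ker)
    (hD : P.ker ≤ D.ker) (hCD : ∀ y, IsFixedPt C y ↔ IsFixedPt D y) :
    (P - C).ker = (P - D).ker := by
  ext x
  rw [mem_ker_sub_iff_isFixedPt hP hC, mem_ker_sub_iff_isFixedPt hP hD, hCD]

end Module

end ContinuousLinearMap

theorem stmt14 (P A B : H →L[ℂ] H) (hP : IsOrthoProj P)
    (hA : A.IsPositive) (hAP : (P - A).IsPositive)
    (hB : B.IsPositive) (hB2 : B ∘L B = A) :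
    (LinearMap.range ((P - A : H →L[ℂ] H) : H →ₗ[ℂ] H)).topologicalClosure =
        (LinearMap.range ((P - A ∘L A : H →L[ℂ] H) : H →ₗ[ℂ] H)).topologicalClosure ∧
      (LinearMap.range ((P - A : H →L[ℂ] H) : H →ₗ[ℂ] H)).topologicalClosure =
        (LinearMap.range ((P - B : H →L[ℂ] H) : H →ₗ[ℂ] H)).topologicalClosure := by
  obtain ⟨hPP, hPadj⟩ := hP
  have hPsa : IsSelfAdjoint P := isSelfAdjoint_iff'.mpr hPadj
  have hkerB : P.ker ≤ B.ker := ker_le_ker_of_sub_isPositive hAP hB.isSelfAdjoint hB2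
  have hkerA : P.ker ≤ A.ker := hB2 ▸ hkerB.trans (ker_le_ker_comp _ _)
  have hkerAA : P.ker ≤ (A ∘L A).ker := hkerA.trans (ker_le_ker_comp _ _)
  refine ⟨topologicalClosure_range_eq_of_ker_eq (hPsa.sub hA.isSelfAdjoint)
      (hPsa.sub (hA.isSelfAdjoint.pow 2)) ?_,
    topologicalClosure_range_eq_of_ker_eq (hPsa.sub hA.isSelfAdjoint)
      (hPsa.sub hB.isSelfAdjoint) ?_⟩
  · exact ker_sub_eq_ker_sub hPP hkerA hkerAA fun y => hA.isFixedPt_comp_self_iff.symm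
  · exact ker_sub_eq_ker_sub hPP hkerA hkerB fun y => hB2 ▸ hB.isFixedPt_comp_self_iff
end

section
/- Let P be an orthogonal projection and A a positive operator with 0 ≤ A ≤ P on a Hilbert space H. Then cl R(A − A²) = cl R(A(P − A)) = cl R(P_A − A), where P_A is the orthogonal projection onto cl R(A). -/
open ContinuousLinearMap Submodule LinearMap

variable {H : Type*} [NormedAddCommGroup H] [InnerProductSpace ℂ H] [CompleteSpace H]

/-!
Write `Q` for the projection onto `cl R(A)`. From `0 ≤ A ≤ P` the form `⟪A w, w⟫` vanishes on
`ker P`, and a positive operator vanishes wherever its form does, so `A P = A` and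
`A - A² = A (P - A)`. Both `A - A²` and `Q - A` are self-adjoint, so the closures of their ranges
are the orthogonal complements of their kernels, and the kernels agree: `A x = A² x` puts
`x - A x` in `ker A = cl R(A)ᗮ`, whence `Q x = Q (A x) = A x`; conversely `A Q = A`.
-/

open scoped InnerProductSpace ComplexOrder

section Positive

variable {E : Type*} [NormedAddCommGroup E] [InnerProductSpace ℂ E] [CompleteSpace E]

lemma ContinuousLinearMap.IsPositive.apply_eq_zero_of_inner_self_eq_zero {T : E →L[ℂ] E}
    (hT : T.IsPositive) {x : E} (hx : ⟪T x, x⟫_ℂ = 0) : T x = 0 := by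
  -- `T = S²` with `S = √T` self-adjoint, so `⟪T x, x⟫ = ‖S x‖²`.
  have hT0 : 0 ≤ T := (nonneg_iff_isPositive T).mpr hT
  have hS : IsSelfAdjoint (CFC.sqrt T) := (CFC.sqrt_nonneg T).isSelfAdjoint
  have hST : ∀ y, CFC.sqrt T (CFC.sqrt T y) = T y := fun y => by
    rw [← comp_apply, ← mul_def, CFC.sqrt_mul_sqrt_self T]
  have hSx : CFC.sqrt T x = 0 := by
    rw [← inner_self_eq_zero (𝕜 := ℂ), ← adjoint_inner_left, hS.adjoint_eq, hST, hx]
  rw [← hST, hSx, map_zero]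

lemma ContinuousLinearMap.IsPositive.comp_eq_self_of_le_idempotent {A P : E →L[ℂ] E}
    (hA : A.IsPositive) (hAP : (P - A).IsPositive) (hP : P ∘L P = P) : A ∘L P = A := by
  ext x
  set w := x - P x
  have hPw : P w = 0 := by
    rw [map_sub, ← comp_apply, hP, sub_self]
  have hw : ⟪A w, w⟫_ℂ = 0 := by
    have h := hAP.inner_nonneg_left w
    rw [_root_.sub_apply, hPw, zero_sub, inner_neg_left, neg_nonneg] at h
    exact le_antisymm h (hA.inner_nonneg_left w)
  have hAw := hA.apply_eq_zero_of_inner_self_eq_zero hw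
  rw [map_sub, sub_eq_zero] at hAw
  exact hAw.symm

end Positive

namespace IsSelfAdjoint

variable {𝕜 E : Type*} [RCLike 𝕜] [NormedAddCommGroup E] [InnerProductSpace 𝕜 E] [CompleteSpace E]
  {T : E →L[𝕜] E}

lemma orthogonal_closure_range (hT : IsSelfAdjoint T) :
    (LinearMap.range (T : E →ₗ[𝕜] E)).topologicalClosureᗮ = LinearMap.ker (T : E →ₗ[𝕜] E) := by
  rw [orthogonal_closure, ContinuousLinearMap.orthogonal_range, hT.adjoint_eq]

lemma closure_range_eq_orthogonal_ker (hT : IsSelfAdjoint T) :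
    (LinearMap.range (T : E →ₗ[𝕜] E)).topologicalClosure = (LinearMap.ker (T : E →ₗ[𝕜] E))ᗮ := by
  rw [← hT.orthogonal_closure_range, orthogonal_orthogonal]

lemma ker_sub_comp_self_eq_ker_starProjection_sub (hT : IsSelfAdjoint T) :
    LinearMap.ker ((T - T ∘L T : E →L[𝕜] E) : E →ₗ[𝕜] E) =
      LinearMap.ker (((LinearMap.range (T : E →ₗ[𝕜] E)).topologicalClosure.starProjection - T :
        E →L[𝕜] E) : E →ₗ[𝕜] E) := by
  set K := (LinearMap.range (T : E →ₗ[𝕜] E)).topologicalClosure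
  have hQT : ∀ x, K.starProjection (T x) = T x := fun x =>
    starProjection_eq_self_iff.mpr (le_topologicalClosure _ ⟨x, rfl⟩)
  ext x
  simp only [LinearMap.mem_ker, ContinuousLinearMap.coe_coe, _root_.sub_apply,
    ContinuousLinearMap.comp_apply, sub_eq_zero]
  constructor
  · intro hx
    have hker : x - T x ∈ Kᗮ := by
      rw [hT.orthogonal_closure_range, LinearMap.mem_ker, ContinuousLinearMap.coe_coe, map_sub,
        ← hx, sub_self]
    rw [← sub_eq_zero, ← hQT x, ← map_sub]
    exact K.starProjection_apply_eq_zero_iff.mpr hker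
  · intro hx
    have hker : x - K.starProjection x ∈ LinearMap.ker (T : E →ₗ[𝕜] E) := by
      rw [← hT.orthogonal_closure_range]
      exact sub_starProjection_mem_orthogonal x
    rw [LinearMap.mem_ker, ContinuousLinearMap.coe_coe, map_sub, hx, sub_eq_zero] at hker
    exact hker

end IsSelfAdjoint

theorem stmt15 (P A : H →L[ℂ] H) (hP : IsOrthoProj P)
    (hA : A.IsPositive) (hAP : (P - A).IsPositive) :
    (LinearMap.range ((A - A ∘L A : H →L[ℂ] H) : H →ₗ[ℂ] H)).topologicalClosure =
        (LinearMap.range ((A ∘L (P - A) : H →L[ℂ] H) : H →ₗ[ℂ] H)).topologicalClosure ∧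
      (LinearMap.range ((A - A ∘L A : H →L[ℂ] H) : H →ₗ[ℂ] H)).topologicalClosure =
        (LinearMap.range ((projOn (LinearMap.range (A : H →ₗ[ℂ] H)).topologicalClosure - A : H →L[ℂ] H) : H →ₗ[ℂ] H)).topologicalClosure := by
  have hAsa : IsSelfAdjoint A := hA.isSelfAdjoint
  have hAP_eq : A ∘L P = A := hA.comp_eq_self_of_le_idempotent hAP hP.1
  refine ⟨by rw [ContinuousLinearMap.comp_sub, hAP_eq], ?_⟩
  have hsa₁ : IsSelfAdjoint (A - A ∘L A) := hAsa.sub (hAsa.pow 2)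
  have hsa₂ : IsSelfAdjoint
      ((LinearMap.range (A : H →ₗ[ℂ] H)).topologicalClosure.starProjection - A) :=
    (isSelfAdjoint_starProjection _).sub hAsa
  rw [hsa₁.closure_range_eq_orthogonal_ker, hAsa.ker_sub_comp_self_eq_ker_starProjection_sub,
    ← hsa₂.closure_range_eq_orthogonal_ker]
  rfl
end

section
/- Let V be a partial isometry on a Hilbert space H such that V²V* is a positive operator and cl R(V²V*) = R(V). Then T := V² is a product of two orthogonal projections, namely T = P_{R(V)} P_{N(V)^⊥}, and V is the partial isometry in the polar decomposition of T. -/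
/-!
For a partial isometry `V`, `V†V` and `VV†` are the orthogonal projections `Q` onto `N(V)ᗮ` and
`P` onto `cl R(V)`, so `A = V²V† = VP`. Self-adjointness of `A` gives `VP = PV†`, hence
`V² = VPV = PV†V = PQ`. As `A` is self-adjoint, `N(A) ⊥ cl R(A) = R(V)`, and `A(Vx) = V²x`,
so `N(V²) = N(V)`. Finally `QV = V†AV` is positive with `(QV)² = QV² = QPQ = (V²)†V²`, so it is
`|V²|` by uniqueness of positive square roots, and `V |V²| = VQV = V²`.
-/

open ContinuousLinearMap Submodule LinearMap

variable {H : Type*} [NormedAddCommGroup H] [InnerProductSpace ℂ H] [CompleteSpace H]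

/-- `V` is a partial isometry: it is isometric on the orthogonal complement of its kernel. -/
def IsPartialIsometry (V : H →L[ℂ] H) : Prop :=
  ∀ x ∈ (LinearMap.ker (V : H →ₗ[ℂ] H))ᗮ, ‖V x‖ = ‖x‖

open scoped InnerProduct InnerProductSpace

theorem isOrthoProj_starProjection (K : Submodule ℂ H) [K.HasOrthogonalProjection] :
    IsOrthoProj K.starProjection :=
  ⟨K.isIdempotentElem_starProjection, (isSelfAdjoint_starProjection K).adjoint_eq⟩

namespace ContinuousLinearMap

variable {𝕜 E F : Type*} [RCLike 𝕜] [NormedAddCommGroup E] [InnerProductSpace 𝕜 E]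
  [CompleteSpace E] [NormedAddCommGroup F] [InnerProductSpace 𝕜 F] [CompleteSpace F]

omit [CompleteSpace F] in
theorem comp_starProjection_orthogonal_ker_s17 (T : E →L[𝕜] F) :
    T ∘L T.kerᗮ.starProjection = T := by
  ext x
  have hker : T (T.ker.starProjection x) = 0 :=
    Submodule.coe_mem (T.ker.orthogonalProjectionOnto x)
  simp [Submodule.starProjection_orthogonal, hker]

theorem starProjection_orthogonal_ker_comp_adjoint (T : E →L[𝕜] F) :
    T.kerᗮ.starProjection ∘L T† = T† := by
  simpa [adjoint_comp, (isSelfAdjoint_starProjection _).adjoint_eq] using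
    congr_arg adjoint T.comp_starProjection_orthogonal_ker_s17

omit [CompleteSpace E] in
theorem starProjection_closure_range_comp (T : E →L[𝕜] F) :
    T.range.topologicalClosure.starProjection ∘L T = T := by
  ext x
  exact Submodule.starProjection_eq_self_iff.mpr
    (Submodule.le_topologicalClosure _ (LinearMap.mem_range_self _ x))

theorem eq_zero_of_mem_closure_range_of_adjoint_apply_eq_zero (T : E →L[𝕜] F) {y : F}
    (hy : y ∈ T.range.topologicalClosure) (hTy : (T†) y = 0) : y = 0 := by
  have hy' : y ∈ T.range.topologicalClosureᗮ := by
    rw [Submodule.orthogonal_closure, orthogonal_range]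
    exact hTy
  exact (Submodule.inf_orthogonal_eq_bot _).le ⟨hy, hy'⟩

end ContinuousLinearMap

namespace IsPartialIsometry

variable {V : H →L[ℂ] H}

omit [CompleteSpace H] in
theorem inner_map_map (hV : IsPartialIsometry V) {x y : H} (hx : x ∈ V.kerᗮ) (hy : y ∈ V.kerᗮ) :
    ⟪V x, V y⟫_ℂ = ⟪x, y⟫_ℂ :=
  LinearIsometry.inner_map_map ⟨(V ∘L V.kerᗮ.subtypeL).toLinearMap, fun z => hV z z.2⟩
    (⟨x, hx⟩ : V.kerᗮ) ⟨y, hy⟩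

theorem adjoint_comp_self (hV : IsPartialIsometry V) : V† ∘L V = V.kerᗮ.starProjection := by
  ext x
  refine ext_inner_right ℂ fun y => ?_
  have hVQ (z : H) : V (V.kerᗮ.starProjection z) = V z :=
    congr($(V.comp_starProjection_orthogonal_ker_s17) z)
  calc ⟪(V† ∘L V) x, y⟫_ℂ = ⟪V (V.kerᗮ.starProjection x), V (V.kerᗮ.starProjection y)⟫_ℂ := by
        rw [ContinuousLinearMap.comp_apply, ContinuousLinearMap.adjoint_inner_left, hVQ, hVQ]
    _ = ⟪V.kerᗮ.starProjection x, V.kerᗮ.starProjection y⟫_ℂ :=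
        hV.inner_map_map (Submodule.coe_mem _) (Submodule.coe_mem _)
    _ = ⟪V.kerᗮ.starProjection x, y⟫_ℂ :=
        Submodule.inner_orthogonalProjectionOnto_eq_of_mem_left _ _

theorem self_comp_adjoint (hV : IsPartialIsometry V) :
    V ∘L V† = V.range.topologicalClosure.starProjection := by
  ext x
  have hmem : V ((V†) x) ∈ V.range.topologicalClosure :=
    Submodule.le_topologicalClosure _ (LinearMap.mem_range_self _ _)
  have horth : x - V ((V†) x) ∈ V.range.topologicalClosureᗮ := by
    have h := congr($(V.starProjection_orthogonal_ker_comp_adjoint) x)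
    rw [← hV.adjoint_comp_self, ContinuousLinearMap.comp_apply,
      ContinuousLinearMap.comp_apply] at h
    rw [Submodule.orthogonal_closure, ContinuousLinearMap.orthogonal_range]
    change (V†) (x - V ((V†) x)) = 0
    rw [map_sub, h, sub_self]
  exact (Submodule.eq_starProjection_of_mem_orthogonal hmem horth).symm

theorem comp_starProjection_eq_starProjection_comp_adjoint (hV : IsPartialIsometry V)
    (hA : IsSelfAdjoint (V ∘L V ∘L V†)) :
    V ∘L V.range.topologicalClosure.starProjection =
      V.range.topologicalClosure.starProjection ∘L V† := by
  have h := hA.adjoint_eq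
  rw [hV.self_comp_adjoint, ContinuousLinearMap.adjoint_comp,
    (isSelfAdjoint_starProjection _).adjoint_eq] at h
  exact h.symm

theorem sq_eq_starProjection_comp_starProjection (hV : IsPartialIsometry V)
    (hA : IsSelfAdjoint (V ∘L V ∘L V†)) :
    V ∘L V = V.range.topologicalClosure.starProjection ∘L V.kerᗮ.starProjection :=
  calc V ∘L V = (V ∘L V.range.topologicalClosure.starProjection) ∘L V := by
        rw [ContinuousLinearMap.comp_assoc, starProjection_closure_range_comp]
    _ = _ := by
      rw [hV.comp_starProjection_eq_starProjection_comp_adjoint hA,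
        ContinuousLinearMap.comp_assoc, hV.adjoint_comp_self]

theorem ker_eq_ker_sq (hV : IsPartialIsometry V) (hA : IsSelfAdjoint (V ∘L V ∘L V†))
    (hran : (V ∘L V ∘L V†).range.topologicalClosure = V.range) : V.ker = (V ∘L V).ker := by
  refine le_antisymm (fun x hx => ?_) (fun x hx => ?_)
  · simp_all
  · have hVVx : V (V x) = 0 := hx
    have hAVx : (V ∘L V ∘L V†) (V x) = 0 := by
      have hPVx : V.range.topologicalClosure.starProjection (V x) = V x :=
        congr($(V.starProjection_closure_range_comp) x)
      rw [hV.self_comp_adjoint, ContinuousLinearMap.comp_apply, hPVx, hVVx]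
    have hmem : V x ∈ (V ∘L V ∘L V†).range.topologicalClosure :=
      hran ▸ LinearMap.mem_range_self _ x
    exact (V ∘L V ∘L V†).eq_zero_of_mem_closure_range_of_adjoint_apply_eq_zero hmem
      (by rwa [hA.adjoint_eq])

theorem isPositive_starProjection_comp (hV : IsPartialIsometry V)
    (hpos : (V ∘L V ∘L V†).IsPositive) : (V.kerᗮ.starProjection ∘L V).IsPositive := by
  have h : V† ∘L (V ∘L V ∘L V†) ∘L V = V.kerᗮ.starProjection ∘L V :=
    calc _ = (V† ∘L V) ∘L V ∘L (V† ∘L V) := by simp only [ContinuousLinearMap.comp_assoc]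
      _ = _ := by rw [hV.adjoint_comp_self, V.comp_starProjection_orthogonal_ker_s17]
  exact h ▸ hpos.adjoint_conj V

theorem sq_starProjection_comp (hV : IsPartialIsometry V)
    (hA : IsSelfAdjoint (V ∘L V ∘L V†)) :
    (V.kerᗮ.starProjection ∘L V) ∘L (V.kerᗮ.starProjection ∘L V) = (V ∘L V)† ∘L (V ∘L V) := by
  have hsq := hV.sq_eq_starProjection_comp_starProjection hA
  set P := V.range.topologicalClosure.starProjection
  set Q := V.kerᗮ.starProjection
  have hP : IsOrthoProj P := isOrthoProj_starProjection _
  have hQ : IsOrthoProj Q := isOrthoProj_starProjection _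
  calc (Q ∘L V) ∘L (Q ∘L V) = Q ∘L (V ∘L Q) ∘L V := by simp only [ContinuousLinearMap.comp_assoc]
    _ = Q ∘L (P ∘L Q) := by rw [V.comp_starProjection_orthogonal_ker_s17, hsq]
    _ = (Q ∘L P) ∘L (P ∘L Q) := by
      rw [ContinuousLinearMap.comp_assoc, ← ContinuousLinearMap.comp_assoc P P Q, hP.1]
    _ = (V ∘L V)† ∘L (V ∘L V) := by rw [hsq, ContinuousLinearMap.adjoint_comp, hP.2, hQ.2]

theorem eq_starProjection_comp_of_isPositive_of_comp_self_eq (hV : IsPartialIsometry V)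
    (hpos : (V ∘L V ∘L V†).IsPositive) {S : H →L[ℂ] H} (hS : S.IsPositive)
    (hS2 : S ∘L S = (V ∘L V)† ∘L (V ∘L V)) : S = V.kerᗮ.starProjection ∘L V :=
  (CFC.mul_self_eq_mul_self_iff S _ ((ContinuousLinearMap.nonneg_iff_isPositive S).2 hS)
    ((ContinuousLinearMap.nonneg_iff_isPositive _).2 (hV.isPositive_starProjection_comp hpos))).1
    (hS2.trans (hV.sq_starProjection_comp hpos.isSelfAdjoint).symm)

end IsPartialIsometry

theorem stmt17 (V : H →L[ℂ] H) (hV : IsPartialIsometry V)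
    (hpos : (V ∘L V ∘L ContinuousLinearMap.adjoint V).IsPositive)
    (hran : (LinearMap.range ((V ∘L V ∘L ContinuousLinearMap.adjoint V : H →L[ℂ] H) : H →ₗ[ℂ] H)).topologicalClosure =
      LinearMap.range (V : H →ₗ[ℂ] H)) :
    (∃ P Q : H →L[ℂ] H, IsOrthoProj P ∧ IsOrthoProj Q ∧ V ∘L V = P ∘L Q) ∧
      V ∘L V =
        projOn (LinearMap.range (V : H →ₗ[ℂ] H)).topologicalClosure ∘L projOn (LinearMap.ker (V : H →ₗ[ℂ] H))ᗮ ∧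
      LinearMap.ker (V : H →ₗ[ℂ] H) = LinearMap.ker ((V ∘L V : H →L[ℂ] H) : H →ₗ[ℂ] H) ∧
      ∀ S : H →L[ℂ] H, S.IsPositive →
        S ∘L S = ContinuousLinearMap.adjoint (V ∘L V) ∘L (V ∘L V) →
        V ∘L V = V ∘L S := by
  have hsq := hV.sq_eq_starProjection_comp_starProjection hpos.isSelfAdjoint
  refine ⟨⟨_, _, isOrthoProj_starProjection _, isOrthoProj_starProjection _, hsq⟩, hsq,
    hV.ker_eq_ker_sq hpos.isSelfAdjoint hran, fun S hS hS2 => ?_⟩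
  rw [hV.eq_starProjection_comp_of_isPositive_of_comp_self_eq hpos hS hS2,
    ← ContinuousLinearMap.comp_assoc, V.comp_starProjection_orthogonal_ker_s17]
end

section
/- Let T = PQ for orthogonal projections P, Q on a Hilbert space H, and let T = V|T| be its polar decomposition. Then V²V* is a positive operator, cl R(V²V*) = R(V), and moreover VP_{R(V)} = |T*| = (TT*)^{1/2}. -/
open ContinuousLinearMap Submodule LinearMap

variable {H : Type*} [NormedAddCommGroup H] [InnerProductSpace ℂ H] [CompleteSpace H]

/-!
Write `A = |T|`. From `A² = T^*T` we get `ker A = ker T = ker V`, so `V^*V` is the identity on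
`R(A) ⊆ (ker V)ᗮ` and `T^*T = A V^*V A = A²`. For `T = PQ` one has `T T^* T = PQPQ = T²`, that is
`V A³ = V A V A`; cancelling `V`, then `A²`, then `A` (all three have the same kernel) gives
`V A² = V² A`, and since `R(A)` is dense in `(ker V)ᗮ`, `V² = V A`. Hence `V² V^* = V A V^*` is
positive with square `V A² V^* = T T^*`, so it is `|T^*|`, and it equals `V P_{R(V)}` because
`V V^*` is the projection onto the closed range of `V`. Finally `ker (V A V^*) = ker V^*`, which
gives `cl R(V² V^*) = (ker V^*)ᗮ = R(V)`.
-/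

open scoped InnerProduct ComplexInnerProductSpace

namespace ContinuousLinearMap

variable {𝕜 E F G : Type*} [RCLike 𝕜] [NormedAddCommGroup E] [InnerProductSpace 𝕜 E]
  [NormedAddCommGroup F] [InnerProductSpace 𝕜 F] [NormedAddCommGroup G] [InnerProductSpace 𝕜 G]

theorem ker_comp_of_range_le_orthogonal_ker {S : F →L[𝕜] G} {R : E →L[𝕜] F}
    (h : R.range ≤ S.kerᗮ) : (S ∘L R).ker = R.ker := by
  refine le_antisymm (fun x hx => ?_) (LinearMap.ker_le_ker_comp _ _)
  have hRx : R x ∈ S.ker ⊓ S.kerᗮ := ⟨hx, h ⟨x, rfl⟩⟩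
  rwa [Submodule.inf_orthogonal_eq_bot, Submodule.mem_bot] at hRx

theorem mul_eq_mul_of_ker_le {S R X Y : E →L[𝕜] E} (h : S.ker ≤ R.ker) (hS : S * X = S * Y) :
    R * X = R * Y := by
  ext x
  have hXY : X x - Y x ∈ S.ker := by
    simpa [sub_eq_zero] using congr($hS x)
  simpa [sub_eq_zero] using h hXY

variable [CompleteSpace E] [CompleteSpace F]

theorem range_adjoint_le_orthogonal_ker (T : E →L[𝕜] F) : T†.range ≤ T.kerᗮ := by
  rw [T.orthogonal_ker]
  exact Submodule.le_topologicalClosure _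

theorem _root_.IsSelfAdjoint.range_le_orthogonal_ker {A : E →L[𝕜] E} (hA : IsSelfAdjoint A) :
    A.range ≤ A.kerᗮ := by
  simpa [isSelfAdjoint_iff'.mp hA] using A.range_adjoint_le_orthogonal_ker

theorem _root_.IsSelfAdjoint.topologicalClosure_range_s18 {A : E →L[𝕜] E} (hA : IsSelfAdjoint A) :
    A.range.topologicalClosure = A.kerᗮ := by
  rw [A.orthogonal_ker, isSelfAdjoint_iff'.mp hA]

theorem _root_.IsSelfAdjoint.ker_mul_self {A : E →L[𝕜] E} (hA : IsSelfAdjoint A) :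
    (A * A).ker = A.ker := by
  have h := A.ker_adjoint_comp_self
  rwa [isSelfAdjoint_iff'.mp hA] at h

theorem ker_eq_ker_of_mul_self_eq {A : E →L[𝕜] E} {T : E →L[𝕜] F} (hA : IsSelfAdjoint A)
    (h : A * A = T† ∘L T) : A.ker = T.ker := by
  rw [← hA.ker_mul_self, h, T.ker_adjoint_comp_self]

theorem eq_zero_of_mul_eq_zero_of_ker_le {X A : E →L[𝕜] E} (hA : IsSelfAdjoint A)
    (hXA : X * A = 0) (hker : A.ker ≤ X.ker) : X = 0 := by
  have hAX : A * X† = 0 := by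
    simpa [mul_def, adjoint_comp, isSelfAdjoint_iff'.mp hA] using congr(($hXA)†)
  suffices hX : X† = 0 by simpa using congr(($hX)†)
  ext x
  have hx : (X†) x ∈ X.ker ⊓ X.kerᗮ :=
    ⟨hker (by simpa using congr($hAX x)), X.range_adjoint_le_orthogonal_ker ⟨x, rfl⟩⟩
  rwa [Submodule.inf_orthogonal_eq_bot, Submodule.mem_bot] at hx

theorem adjoint_mul_of_isSelfAdjoint (V : E →L[𝕜] E) {A : E →L[𝕜] E} (hA : IsSelfAdjoint A) :
    (V * A)† = A * V† := by
  rw [← star_eq_adjoint, star_mul, hA.star_eq, star_eq_adjoint]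

theorem ker_comp_comp_adjoint_of_ker_eq {V : E →L[𝕜] F} {A : E →L[𝕜] E} (hA : IsSelfAdjoint A)
    (hkerA : A.ker = V.ker) : (V ∘L A ∘L V†).ker = V†.ker := by
  rw [ker_comp_of_range_le_orthogonal_ker, ker_comp_of_range_le_orthogonal_ker]
  · exact hkerA ▸ V.range_adjoint_le_orthogonal_ker
  · exact hkerA ▸ (LinearMap.range_comp_le_range _ _).trans hA.range_le_orthogonal_ker

end ContinuousLinearMap

theorem ContinuousLinearMap.IsPositive.eq_of_mul_self_eq {A B : H →L[ℂ] H} (hA : A.IsPositive)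
    (hB : B.IsPositive) (h : A * A = B * B) : A = B :=
  (CFC.mul_self_eq_mul_self_iff A B ((nonneg_iff_isPositive A).mpr hA)
    ((nonneg_iff_isPositive B).mpr hB)).mp h

theorem IsOrthoProj.mul_mul_adjoint_mul {P Q : H →L[ℂ] H} (hP : IsOrthoProj P)
    (hQ : IsOrthoProj Q) : P * Q * (P * Q)† * (P * Q) = P * Q * (P * Q) := by
  have hPP : P * P = P := hP.1
  have hQQ : Q * Q = Q := hQ.1
  have hadj : (P * Q)† = Q * P := by
    rw [← ContinuousLinearMap.star_eq_adjoint, star_mul, ContinuousLinearMap.star_eq_adjoint,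
      ContinuousLinearMap.star_eq_adjoint, hP.2, hQ.2]
  rw [hadj, show P * Q * (Q * P) * (P * Q) = P * (Q * Q) * (P * P) * Q by simp only [mul_assoc],
    hQQ, hPP, mul_assoc]

namespace IsPartialIsometry

variable {T V A : H →L[ℂ] H}

theorem adjoint_apply_apply (hV : IsPartialIsometry V) {x : H} (hx : x ∈ V.kerᗮ) :
    (V†) (V x) = x := by
  refine ext_inner_right ℂ fun y => ?_
  obtain ⟨a, ha, b, hb, rfl⟩ := V.ker.exists_add_mem_mem_orthogonal y
  have hVisom : ⟪V x, V b⟫ = ⟪x, b⟫ :=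
    (⟨V.toLinearMap ∘ₗ V.kerᗮ.subtype, fun z => hV z z.2⟩ : V.kerᗮ →ₗᵢ[ℂ] H).inner_map_map
      ⟨x, hx⟩ ⟨b, hb⟩
  have hVa : V a = 0 := ha
  rw [ContinuousLinearMap.adjoint_inner_left, map_add, hVa, zero_add, hVisom,
    inner_add_right, Submodule.inner_left_of_mem_orthogonal ha hx, zero_add]

theorem adjoint_mul_self_mul_of_range_le (hV : IsPartialIsometry V) (hA : A.range ≤ V.kerᗮ) :
    V† * V * A = A := by
  ext x
  exact hV.adjoint_apply_apply (hA ⟨x, rfl⟩)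

theorem adjoint_mul_self_mul_adjoint (hV : IsPartialIsometry V) : V† * V * V† = V† :=
  hV.adjoint_mul_self_mul_of_range_le V.range_adjoint_le_orthogonal_ker

theorem mul_adjoint_mul_self (hV : IsPartialIsometry V) : V * V† * V = V := by
  have h := congr(star $hV.adjoint_mul_self_mul_adjoint)
  rw [star_mul, star_mul] at h
  simpa only [ContinuousLinearMap.star_eq_adjoint, ContinuousLinearMap.adjoint_adjoint, mul_assoc]
    using h

theorem isClosed_range (hV : IsPartialIsometry V) : IsClosed (V.range : Set H) := by
  have hidem : IsIdempotentElem (V * V†) := by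
    rw [IsIdempotentElem, ← mul_assoc, hV.mul_adjoint_mul_self]
  have hrange : ((V * V† : H →L[ℂ] H) : H →ₗ[ℂ] H).range = V.range := by
    refine le_antisymm (LinearMap.range_comp_le_range _ _) ?_
    rintro _ ⟨x, rfl⟩
    exact ⟨V x, congr($hV.mul_adjoint_mul_self x)⟩
  exact hrange ▸ hidem.isClosed_range

theorem mul_adjoint_eq_projOnc (hV : IsPartialIsometry V) :
    V * V† = projOnc V.range hV.isClosed_range := by
  have : CompleteSpace V.range := hV.isClosed_range.completeSpace_coe
  ext x
  refine (Submodule.eq_starProjection_of_mem_of_inner_eq_zero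
    (LinearMap.mem_range_self (V : H →ₗ[ℂ] H) ((V†) x)) ?_).symm
  rintro _ ⟨y, rfl⟩
  have hVVV : (V†) (V ((V†) x)) = (V†) x := congr($hV.adjoint_mul_self_mul_adjoint x)
  simp only [ContinuousLinearMap.coe_coe]
  rw [← ContinuousLinearMap.adjoint_inner_left, map_sub, hVVV, sub_self, inner_zero_left]

theorem adjoint_mul_self_mul_of_ker_eq (hV : IsPartialIsometry V) (hA : IsSelfAdjoint A)
    (hkerA : A.ker = V.ker) : V† * V * A = A :=
  hV.adjoint_mul_self_mul_of_range_le (hkerA ▸ hA.range_le_orthogonal_ker)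

theorem mul_self_eq_mul_of_polar (hV : IsPartialIsometry V) (hA : IsSelfAdjoint A)
    (hkerA : A.ker = V.ker) (hpolar : T = V * A) (hT : T * T† * T = T * T) :
    V * V = V * A := by
  have hTT : T† * T = A * A := by
    rw [hpolar, V.adjoint_mul_of_isSelfAdjoint hA, mul_assoc, ← mul_assoc (V†),
      hV.adjoint_mul_self_mul_of_ker_eq hA hkerA]
  have h1 : V * (A * A * A) = V * (A * V * A) := by
    rw [mul_assoc T, hTT, hpolar] at hT
    simpa only [mul_assoc] using hT
  have h2 : A * A * (A * A) = A * A * (V * A) := by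
    simpa only [mul_assoc] using mul_eq_mul_of_ker_le hkerA.ge h1
  have h3 : A * (A * A) = A * (V * A) := mul_eq_mul_of_ker_le hA.ker_mul_self.le h2
  have h4 : V * (A * A) = V * (V * A) := mul_eq_mul_of_ker_le hkerA.le h3
  refine sub_eq_zero.mp (eq_zero_of_mul_eq_zero_of_ker_le hA ?_ fun x hx => ?_)
  · rw [sub_mul, sub_eq_zero]
    simpa only [mul_assoc] using h4.symm
  · have hAx : A x = 0 := hx
    have hVx : V x = 0 := (hkerA ▸ hx : x ∈ V.ker)
    simp [hAx, hVx]

theorem conj_mul_self_eq (hV : IsPartialIsometry V) (hA : IsSelfAdjoint A)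
    (hkerA : A.ker = V.ker) (hpolar : T = V * A) :
    V * (A * V†) * (V * (A * V†)) = T * T† :=
  calc V * (A * V†) * (V * (A * V†)) = V * A * (V† * V * A) * V† := by
        simp only [mul_assoc]
    _ = T * T† := by
        rw [hV.adjoint_mul_self_mul_of_ker_eq hA hkerA, hpolar,
          V.adjoint_mul_of_isSelfAdjoint hA]
        simp only [mul_assoc]

end IsPartialIsometry

theorem stmt18 (P Q T V absT : H →L[ℂ] H) (hP : IsOrthoProj P) (hQ : IsOrthoProj Q)
    (hT : T = P ∘L Q)
    (hV : IsPartialIsometry V) (hker : LinearMap.ker (V : H →ₗ[ℂ] H) = LinearMap.ker (T : H →ₗ[ℂ] H))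
    (habs_pos : absT.IsPositive)
    (habs_sq : absT ∘L absT = ContinuousLinearMap.adjoint T ∘L T)
    (hpolar : T = V ∘L absT) :
    (V ∘L V ∘L ContinuousLinearMap.adjoint V).IsPositive ∧
      (LinearMap.range ((V ∘L V ∘L ContinuousLinearMap.adjoint V : H →L[ℂ] H) : H →ₗ[ℂ] H)).topologicalClosure =
        LinearMap.range (V : H →ₗ[ℂ] H) ∧
      ∃ hcl : IsClosed ((LinearMap.range (V : H →ₗ[ℂ] H) : Submodule ℂ H) : Set H),
        ∀ B : H →L[ℂ] H, B.IsPositive →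
          B ∘L B = T ∘L ContinuousLinearMap.adjoint T →
          V ∘L projOnc (LinearMap.range (V : H →ₗ[ℂ] H)) hcl = B := by
  have hA : IsSelfAdjoint absT := habs_pos.isSelfAdjoint
  have hkerA : absT.ker = V.ker := hker ▸ ker_eq_ker_of_mul_self_eq hA habs_sq
  have hVV : V * V = V * absT :=
    hV.mul_self_eq_mul_of_polar hA hkerA hpolar (by rw [hT]; exact hP.mul_mul_adjoint_mul hQ)
  have hB : V ∘L V ∘L V† = V ∘L absT ∘L V† :=
    (by simpa only [mul_assoc] using congr($hVV * V†) : V * (V * V†) = V * (absT * V†))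
  have hpos : (V ∘L absT ∘L V†).IsPositive := habs_pos.conj_adjoint V
  refine ⟨hB ▸ hpos, ?_, hV.isClosed_range, fun B hBpos hBsq => ?_⟩
  · rw [hB, hpos.isSelfAdjoint.topologicalClosure_range_s18,
      ker_comp_comp_adjoint_of_ker_eq hA hkerA, V†.orthogonal_ker,
      ContinuousLinearMap.adjoint_adjoint, hV.isClosed_range.submodule_topologicalClosure_eq]
  · have hsqrt : V ∘L absT ∘L V† = B :=
      hpos.eq_of_mul_self_eq hBpos ((hV.conj_mul_self_eq hA hkerA hpolar).trans hBsq.symm)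
    rw [← hsqrt, ← hB, ← hV.mul_adjoint_eq_projOnc]
    rfl
end
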